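/- Let k ≥ 2 and σ < s. Define the Mehler-type kernel K_{sσ}(y,z) = e^{s−σ} (L/√(4π)) exp(−L²(e^{-(s−σ)/(2k)} y − z)²/4) with L = L(s,σ) = I(σ)/√(1−e^{-(s−σ)}) and I(s) = e^{(s/2)(1−1/k)}. Then for every n ≥ 0, ∫_ℝ K_{sσ}(y,z) H_n(z,σ) dz = e^{(s−σ)(1−n/(2k))} H_n(y,s) for all y ∈ ℝ. -/

import Mathlib

open MeasureTheory Real

/-- Physicists' Hermite polynomial `h_m(z) = ∑_{ℓ=0}^{[m/2]} m!/(ℓ!(m-2ℓ)!) (-1)^ℓ z^{m-2ℓ}`. -/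
noncomputable def hPoly (m : ℕ) (z : ℝ) : ℝ :=
  ∑ ℓ ∈ Finset.range (m / 2 + 1),
    ((Nat.factorial m : ℝ) / ((Nat.factorial ℓ : ℝ) * (Nat.factorial (m - 2 * ℓ) : ℝ))) *
      (-1 : ℝ) ^ ℓ * z ^ (m - 2 * ℓ)

/-- `I(s) = e^{(s/2)(1-1/k)}`. -/
noncomputable def Ifun (k : ℕ) (s : ℝ) : ℝ := Real.exp (s / 2 * (1 - 1 / (k : ℝ)))

/-- Scaled Hermite polynomial `H_m(y,s) = I(s)^{-m} h_m(I(s) y)`. -/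
noncomputable def Hscaled (k : ℕ) (m : ℕ) (y s : ℝ) : ℝ :=
  (Ifun k s) ^ (-(m : ℤ)) * hPoly m (Ifun k s * y)

/-- Gaussian weight `ρ_s(y) = (I(s)/√(4π)) e^{-I(s)² y²/4}`. -/
noncomputable def rhoS (k : ℕ) (s y : ℝ) : ℝ :=
  Ifun k s / Real.sqrt (4 * Real.pi) * Real.exp (-(Ifun k s) ^ 2 * y ^ 2 / 4)

/-- Mehler-type kernel `K_{sσ}(y,z)` with `L = I(σ)/√(1-e^{-(s-σ)})`. -/
noncomputable def mehlerK (k : ℕ) (s σ y z : ℝ) : ℝ :=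
  Real.exp (s - σ) *
    (Ifun k σ / Real.sqrt (1 - Real.exp (-(s - σ))) / Real.sqrt (4 * Real.pi)) *
    Real.exp (-((Ifun k σ / Real.sqrt (1 - Real.exp (-(s - σ)))) ^ 2 *
      (Real.exp (-(s - σ) / (2 * (k : ℝ))) * y - z) ^ 2) / 4)

/-!
Write `hPoly n = heatPoly (-1) n`, where `heatPoly c n x` has exponential generating function
`exp (x t + c t²)`. Computing Gaussian moments shows that convolving with the normalised Gaussian
`(L/√(4π)) exp (-L² (z - μ)² / 4)` sends `z ↦ heatPoly c n (α z)` to `heatPoly (c + α²/L²) n (α μ)`.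
For the Mehler kernel `α = I(σ)` and `α²/L² = 1 - e^{-(s-σ)}`, so the parameter `-1` becomes
`-e^{-(s-σ)}`, and the scaling law `heatPoly (r² c) n (r x) = r ^ n * heatPoly c n x` with
`r = e^{-(s-σ)/2}` turns the result back into `hPoly n`, at the point `I(s) y`.
-/

open scoped Nat
open Finset

lemma Finset.sum_range_succ_eq_sum_two_mul_of_odd {M : Type*} [AddCommMonoid M] {f : ℕ → M}
    (hf : ∀ j, Odd j → f j = 0) (m : ℕ) :
    ∑ j ∈ range (m + 1), f j = ∑ p ∈ range (m / 2 + 1), f (2 * p) := by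
  symm
  rw [← sum_image (g := fun p ↦ 2 * p) fun a _ b _ h ↦ by simpa using h]
  refine sum_subset (fun j ↦ by simp only [mem_image, mem_range]; omega) fun j hj hj' ↦ hf j ?_
  simp only [mem_image, mem_range, not_exists, not_and] at hj hj'
  exact Nat.odd_iff.mpr (by have := hj' (j / 2); omega)

lemma Nat.factorial_two_mul_eq_mul_doubleFactorial (p : ℕ) :
    (2 * p)! = 2 ^ p * p ! * (2 * p - 1)‼ := by
  cases p with
  | zero => rfl
  | succ q =>
    rw [show 2 * (q + 1) = 2 * q + 1 + 1 by ring, factorial_eq_mul_doubleFactorial,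
      show 2 * q + 1 + 1 = 2 * (q + 1) by ring, doubleFactorial_two_mul]
    rfl

noncomputable def hermiteCoeff (m p : ℕ) : ℝ := (m ! : ℝ) / ((p ! : ℝ) * ((m - 2 * p)! : ℝ))

noncomputable def heatPoly (c : ℝ) (m : ℕ) (x : ℝ) : ℝ :=
  ∑ p ∈ range (m / 2 + 1), hermiteCoeff m p * c ^ p * x ^ (m - 2 * p)

lemma hPoly_eq_heatPoly (m : ℕ) (z : ℝ) : hPoly m z = heatPoly (-1) m z := rfl

lemma heatPoly_mul (r c x : ℝ) (m : ℕ) :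
    heatPoly (r ^ 2 * c) m (r * x) = r ^ m * heatPoly c m x := by
  rw [heatPoly, heatPoly, mul_sum]
  refine sum_congr rfl fun p hp ↦ ?_
  rw [← pow_mul_pow_sub r (show 2 * p ≤ m by have := mem_range.mp hp; omega)]
  simp only [mul_pow, ← pow_mul]
  ring

lemma hermiteCoeff_mul_hermiteCoeff {n ℓ p : ℕ} (h : 2 * (ℓ + p) ≤ n) :
    hermiteCoeff n ℓ * hermiteCoeff (n - 2 * ℓ) p = hermiteCoeff n (ℓ + p) * (ℓ + p).choose p := by
  rw [Nat.cast_choose ℝ (Nat.le_add_left p ℓ), Nat.add_sub_cancel]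
  simp only [hermiteCoeff, show n - 2 * ℓ - 2 * p = n - 2 * (ℓ + p) by omega]
  have : ((n - 2 * ℓ)! : ℝ) ≠ 0 := by positivity
  field_simp

/-- The `tⁿ` coefficient of `exp (d t²) * exp (α μ t + α² c t²) = exp (α μ t + (α² c + d) t²)`. -/
lemma sum_hermiteCoeff_mul_heatPoly (n : ℕ) (α c d μ : ℝ) :
    ∑ ℓ ∈ range (n / 2 + 1), hermiteCoeff n ℓ * d ^ ℓ * α ^ (n - 2 * ℓ) * heatPoly c (n - 2 * ℓ) μ
      = heatPoly (α ^ 2 * c + d) n (α * μ) := by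
  simp only [heatPoly, add_pow, mul_sum, sum_mul]
  rw [sum_sigma', sum_sigma']
  refine sum_nbij' (fun x ↦ ⟨x.1 + x.2, x.2⟩) (fun x ↦ ⟨x.1 - x.2, x.2⟩) ?_ ?_ ?_ ?_ ?_
  · rintro ⟨ℓ, p⟩ hx
    simp only [mem_sigma, mem_range] at hx ⊢
    omega
  · rintro ⟨q, p⟩ hx
    simp only [mem_sigma, mem_range] at hx ⊢
    omega
  · rintro ⟨ℓ, p⟩ -
    simp
  · rintro ⟨q, p⟩ hx
    simp only [mem_sigma, mem_range] at hx
    simp [show q - p + p = q by omega]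
  · rintro ⟨ℓ, p⟩ hx
    simp only [mem_sigma, mem_range] at hx
    have h : 2 * (ℓ + p) ≤ n := by omega
    dsimp only
    rw [Nat.add_sub_cancel, ← pow_mul_pow_sub α (show 2 * p ≤ n - 2 * ℓ by omega),
      show n - 2 * ℓ - 2 * p = n - 2 * (ℓ + p) by omega, mul_pow, mul_pow, ← pow_mul]
    linear_combination (d ^ ℓ * c ^ p * α ^ (2 * p) * (α * μ) ^ (n - 2 * (ℓ + p))) *
      hermiteCoeff_mul_hermiteCoeff h

lemma integrable_pow_mul_exp_neg_mul_sq {b : ℝ} (hb : 0 < b) (n : ℕ) :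
    Integrable fun x : ℝ ↦ x ^ n * exp (-b * x ^ 2) := by
  simpa [rpow_natCast] using
    integrable_rpow_mul_exp_neg_mul_sq hb (s := n) (by linarith [n.cast_nonneg (α := ℝ)])

lemma integral_pow_mul_exp_neg_mul_sq_of_odd (b : ℝ) {m : ℕ} (hm : Odd m) :
    ∫ x : ℝ, x ^ m * exp (-b * x ^ 2) = 0 := by
  have h := integral_neg_eq_self (fun x : ℝ ↦ x ^ m * exp (-b * x ^ 2)) volume
  simp only [hm.neg_pow, neg_sq, neg_mul, integral_neg] at h ⊢
  linarith

lemma integral_pow_two_mul_mul_exp_neg_mul_sq {b : ℝ} (hb : 0 < b) (p : ℕ) :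
    ∫ x : ℝ, x ^ (2 * p) * exp (-b * x ^ 2) = √(π / b) * (2 * p)! / (p ! * (4 * b) ^ p) := by
  have habs : ∫ x : ℝ, x ^ (2 * p) * exp (-b * x ^ 2)
      = 2 * ∫ x in Set.Ioi (0 : ℝ), x ^ ((2 * p : ℕ) : ℝ) * exp (-b * x ^ (2 : ℝ)) := by
    rw [← integral_comp_abs]
    congr 1 with x
    rw [rpow_natCast, rpow_two, pow_mul, pow_mul, sq_abs]
  rw [habs, integral_rpow_mul_exp_neg_mul_rpow two_pos
    (by linarith [(2 * p : ℕ).cast_nonneg (α := ℝ)]) hb]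
  have hΓ : Gamma ((((2 * p : ℕ) : ℝ) + 1) / 2) = (2 * p - 1 : ℕ)‼ * √π / 2 ^ p := by
    rw [← Gamma_nat_add_half]; congr 1; push_cast; ring
  have hpow : b ^ (-(((2 * p : ℕ) : ℝ) + 1) / 2) = (b ^ p)⁻¹ * (√b)⁻¹ := by
    rw [sqrt_eq_rpow, ← rpow_natCast, ← rpow_neg hb.le, ← rpow_neg hb.le, ← rpow_add hb]
    congr 1; push_cast; ring
  rw [hΓ, hpow, Nat.factorial_two_mul_eq_mul_doubleFactorial, sqrt_div' _ hb.le, mul_pow,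
    show (4 : ℝ) = 2 ^ 2 by norm_num, ← pow_mul]
  have : (p ! : ℝ) ≠ 0 := by positivity
  have : √b ≠ 0 := by positivity
  push_cast
  field_simp
  ring

lemma exp_neg_mul_sq_mul_add_pow (b μ x : ℝ) (m : ℕ) :
    exp (-b * x ^ 2) * (x + μ) ^ m
      = ∑ j ∈ range (m + 1), x ^ j * exp (-b * x ^ 2) * (μ ^ (m - j) * m.choose j) := by
  rw [add_pow, mul_sum]
  exact sum_congr rfl fun _ _ ↦ by ring

lemma integrable_exp_neg_mul_sq_sub_mul_pow {b : ℝ} (hb : 0 < b) (μ : ℝ) (m : ℕ) :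
    Integrable fun z : ℝ ↦ exp (-b * (z - μ) ^ 2) * z ^ m := by
  have h : Integrable fun x : ℝ ↦ exp (-b * x ^ 2) * (x + μ) ^ m := by
    simp only [exp_neg_mul_sq_mul_add_pow]
    exact integrable_finsetSum _ fun j _ ↦ (integrable_pow_mul_exp_neg_mul_sq hb j).mul_const _
  simpa using h.comp_sub_right μ

lemma integral_exp_neg_mul_sq_sub_mul_pow {b : ℝ} (hb : 0 < b) (μ : ℝ) (m : ℕ) :
    ∫ z : ℝ, exp (-b * (z - μ) ^ 2) * z ^ m = √(π / b) * heatPoly (4 * b)⁻¹ m μ := by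
  rw [← integral_add_right_eq_self _ μ]
  simp only [add_sub_cancel_right, exp_neg_mul_sq_mul_add_pow]
  rw [integral_finsetSum _ fun j _ ↦ (integrable_pow_mul_exp_neg_mul_sq hb j).mul_const _]
  simp only [integral_mul_const]
  rw [sum_range_succ_eq_sum_two_mul_of_odd
    (fun j hj ↦ by rw [integral_pow_mul_exp_neg_mul_sq_of_odd b hj, zero_mul]), heatPoly, mul_sum]
  refine sum_congr rfl fun p hp ↦ ?_
  have h2p : 2 * p ≤ m := by have := mem_range.mp hp; omega
  rw [integral_pow_two_mul_mul_exp_neg_mul_sq hb, Nat.cast_choose ℝ h2p, hermiteCoeff, inv_pow]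
  have : ((2 * p)! : ℝ) ≠ 0 := by positivity
  field_simp

lemma integral_exp_neg_mul_sq_sub_mul_heatPoly {b : ℝ} (hb : 0 < b) (μ α c : ℝ) (n : ℕ) :
    ∫ z : ℝ, exp (-b * (z - μ) ^ 2) * heatPoly c n (α * z)
      = √(π / b) * heatPoly (α ^ 2 * (4 * b)⁻¹ + c) n (α * μ) := by
  have hexpand : ∀ z, exp (-b * (z - μ) ^ 2) * heatPoly c n (α * z) = ∑ ℓ ∈ range (n / 2 + 1),
      hermiteCoeff n ℓ * c ^ ℓ * α ^ (n - 2 * ℓ) * (exp (-b * (z - μ) ^ 2) * z ^ (n - 2 * ℓ)) := by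
    intro z
    rw [heatPoly, mul_sum]
    exact sum_congr rfl fun _ _ ↦ by ring
  simp only [hexpand]
  rw [integral_finsetSum _ fun ℓ _ ↦ (integrable_exp_neg_mul_sq_sub_mul_pow hb μ _).const_mul _]
  simp only [integral_const_mul, integral_exp_neg_mul_sq_sub_mul_pow hb,
    ← sum_hermiteCoeff_mul_heatPoly, mul_sum]
  exact sum_congr rfl fun _ _ ↦ by ring

lemma Ifun_zpow_neg (k n : ℕ) (s : ℝ) :
    Ifun k s ^ (-(n : ℤ)) = exp (-(n * (s / 2 * (1 - 1 / k)))) := by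
  rw [Ifun, zpow_neg, zpow_natCast, ← exp_nat_mul, exp_neg]

lemma Ifun_mul_exp (k : ℕ) (σ s : ℝ) :
    Ifun k σ * exp (-(s - σ) / (2 * k)) = exp (-(s - σ) / 2) * Ifun k s := by
  simp only [Ifun, ← exp_add]
  ring_nf

lemma integral_heatKernel_mul_heatPoly {L : ℝ} (hL : 0 < L) (μ α c : ℝ) (n : ℕ) :
    ∫ z : ℝ, L / √(4 * π) * exp (-(L ^ 2 / 4) * (z - μ) ^ 2) * heatPoly c n (α * z)
      = heatPoly (α ^ 2 / L ^ 2 + c) n (α * μ) := by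
  have hnorm : L / √(4 * π) * √(π / (L ^ 2 / 4)) = 1 := by
    rw [show π / (L ^ 2 / 4) = 4 * π / L ^ 2 by field_simp, sqrt_div' _ (sq_nonneg L),
      sqrt_sq hL.le]
    field_simp
  simp only [mul_assoc, integral_const_mul]
  rw [integral_exp_neg_mul_sq_sub_mul_heatPoly (by positivity), ← mul_assoc, hnorm, one_mul]
  congr 2
  field_simp

lemma mehlerK_eq_exp_mul_heatKernel (k : ℕ) (s σ y z : ℝ) :
    mehlerK k s σ y z = exp (s - σ) * (Ifun k σ / √(1 - exp (-(s - σ))) / √(4 * π) *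
      exp (-((Ifun k σ / √(1 - exp (-(s - σ)))) ^ 2 / 4) *
        (z - exp (-(s - σ) / (2 * k)) * y) ^ 2)) := by
  rw [mehlerK]
  ring_nf

theorem mehler_kernel_on_Hscaled_general (k : ℕ) (σ s : ℝ) (hs : σ < s) (n : ℕ) (y : ℝ) :
    ∫ z : ℝ, mehlerK k s σ y z * Hscaled k n z σ
      = Real.exp ((s - σ) * (1 - (n : ℝ) / (2 * (k : ℝ)))) * Hscaled k n y s := by
  have hε : 0 < 1 - exp (-(s - σ)) := by simpa using hs
  set L := Ifun k σ / √(1 - exp (-(s - σ))) with hL_def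
  clear_value L
  have hL : 0 < L := hL_def ▸ div_pos (exp_pos _) (sqrt_pos.mpr hε)
  have hparam : Ifun k σ ^ 2 / L ^ 2 + -1 = exp (-(s - σ) / 2) ^ 2 * -1 := by
    rw [hL_def, div_pow, sq_sqrt hε.le, ← exp_nat_mul, Nat.cast_ofNat,
      show 2 * (-(s - σ) / 2) = -(s - σ) by ring]
    have : Ifun k σ ≠ 0 := (exp_pos _).ne'
    field_simp
    ring
  calc ∫ z, mehlerK k s σ y z * Hscaled k n z σ
      = exp (s - σ) * Ifun k σ ^ (-(n : ℤ)) * ∫ z, L / √(4 * π) *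
          exp (-(L ^ 2 / 4) * (z - exp (-(s - σ) / (2 * k)) * y) ^ 2) *
            heatPoly (-1) n (Ifun k σ * z) := by
        rw [← integral_const_mul]
        congr 1 with z
        rw [mehlerK_eq_exp_mul_heatKernel, ← hL_def, Hscaled, hPoly_eq_heatPoly]
        ring
    _ = exp (s - σ) * Ifun k σ ^ (-(n : ℤ)) *
          heatPoly (exp (-(s - σ) / 2) ^ 2 * -1) n (exp (-(s - σ) / 2) * (Ifun k s * y)) := by
        rw [integral_heatKernel_mul_heatPoly hL, hparam, ← mul_assoc (Ifun k σ), Ifun_mul_exp,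
          mul_assoc (exp (-(s - σ) / 2))]
    _ = _ := by
        rw [heatPoly_mul, Hscaled, hPoly_eq_heatPoly, Ifun_zpow_neg, Ifun_zpow_neg, ← exp_nat_mul]
        simp only [← mul_assoc, ← exp_add]
        congr 2
        ring

theorem mehler_kernel_on_Hscaled (k : ℕ) (hk : 2 ≤ k) (σ s : ℝ) (hs : σ < s) (n : ℕ) (y : ℝ) :
    ∫ z : ℝ, mehlerK k s σ y z * Hscaled k n z σ
      = Real.exp ((s - σ) * (1 - (n : ℝ) / (2 * (k : ℝ)))) * Hscaled k n y s :=
  mehler_kernel_on_Hscaled_general k σ s hs n y
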